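/- (In classical logic.) If 𝒱 and 𝒲 are basic neighborhood spaces whose quotient spaces 𝒱/≡ and 𝒲/≡ are homeomorphic, then 𝒱 and 𝒲 are isomorphic as natural spaces. -/

import Mathlib

/-! # Natural Topology: basic framework (Waaldijk) -/

/-- A pre-natural space: a countable set of basic dots with a decidable
pre-apartness `apart` and a decidable refinement partial order `refines`. -/
structure PreNaturalSpace (V : Type) : Type where
  countable' : Countable V
  apart : V → V → Prop
  refines : V → V → Prop
  apart_dec : DecidableRel apart
  refines_dec : DecidableRel refines
  apart_symm : ∀ a b, apart a b → apart b a
  apart_irrefl : ∀ a, ¬ apart a a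
  apart_mono : ∀ a b c, refines a b → apart c b → apart c a
  refines_refl : ∀ a, refines a a
  refines_trans : ∀ a b c, refines a b → refines b c → refines a c
  refines_antisymm : ∀ a b, refines a b → refines b a → a = b

namespace PreNaturalSpace

variable {V W : Type}

/-- `a ≺ b` : strict refinement. -/
def strict (P : PreNaturalSpace V) (a b : V) : Prop := P.refines a b ∧ a ≠ b

/-- A point is a shrinking sequence of dots deciding every apart pair of dots. -/
structure IsPoint (P : PreNaturalSpace V) (p : ℕ → V) : Prop where
  mono : ∀ n, P.refines (p (n + 1)) (p n)
  shrink : ∀ n, ∃ m, P.strict (p m) (p n)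
  decides : ∀ a b, P.apart a b → ∃ m, P.apart (p m) a ∨ P.apart (p m) b

/-- The set of points of a pre-natural space. -/
def Pt (P : PreNaturalSpace V) : Type := { p : ℕ → V // P.IsPoint p }

/-- `p` begins with the dot `a` : some `p m ≺ a`. -/
def begins (P : PreNaturalSpace V) (p : ℕ → V) (a : V) : Prop := ∃ m, P.strict (p m) a

/-- Apartness between a dot and a point. -/
def dApart (P : PreNaturalSpace V) (a : V) (p : ℕ → V) : Prop := ∃ m, P.apart (p m) a

/-- Apartness between points. -/
def pApart (P : PreNaturalSpace V) (p q : P.Pt) : Prop := ∃ n, P.apart (p.1 n) (q.1 n)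

/-- Equivalence of points: the negation of apartness. -/
def pEquiv (P : PreNaturalSpace V) (p q : P.Pt) : Prop := ¬ P.pApart p q

variable (P : PreNaturalSpace V)

lemma refines_of_le {p : ℕ → V} (hp : ∀ n, P.refines (p (n + 1)) (p n)) :
    ∀ {m k : ℕ}, m ≤ k → P.refines (p k) (p m) := by
  intro m k h
  induction h with
  | refl => exact P.refines_refl _
  | step h ih => exact P.refines_trans _ _ _ (hp _) ih

lemma begins_mono {z : ℕ → V} (hz : P.IsPoint z) {a b : V} (hab : P.refines a b)
    (h : P.begins z a) : P.begins z b := by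
  obtain ⟨j, hj1, hj2⟩ := h
  have hzb : P.refines (z j) b := P.refines_trans _ _ _ hj1 hab
  by_cases he : z j = b
  · obtain ⟨i, hi1, hi2⟩ := hz.shrink j
    exact ⟨i, P.refines_trans _ _ _ hi1 hzb, fun h' => hi2 (h'.trans he.symm)⟩
  · exact ⟨j, hzb, he⟩

/-- The natural (apartness) topology as a predicate on subsets of the point set. -/
def NatOpen (U : Set P.Pt) : Prop :=
  ∀ x ∈ U, ∀ y : P.Pt, P.pApart y x ∨ ∃ m, { z : P.Pt | P.begins z.1 (y.1 m) } ⊆ U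

instance instTopPt : TopologicalSpace P.Pt where
  IsOpen := P.NatOpen
  isOpen_univ := fun _ _ _ => Or.inr ⟨0, fun _ _ => trivial⟩
  isOpen_inter := by
    intro U U' hU hU' x hx y
    rcases hU x hx.1 y with h | ⟨m, hm⟩
    · exact Or.inl h
    rcases hU' x hx.2 y with h | ⟨k, hk⟩
    · exact Or.inl h
    refine Or.inr ⟨max m k, fun z hz => ⟨hm ?_, hk ?_⟩⟩
    · exact P.begins_mono z.2 (P.refines_of_le y.2.mono (le_max_left m k)) hz
    · exact P.begins_mono z.2 (P.refines_of_le y.2.mono (le_max_right m k)) hz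
  isOpen_sUnion := by
    intro S hS x hx y
    obtain ⟨U, hU, hxU⟩ := hx
    rcases hS U hU x hxU y with h | ⟨m, hm⟩
    · exact Or.inl h
    · exact Or.inr ⟨m, fun z hz => ⟨U, hU, hm hz⟩⟩

lemma pEquiv_refl (p : P.Pt) : P.pEquiv p p := fun ⟨_, h⟩ => P.apart_irrefl _ h

lemma pEquiv_symm {p q : P.Pt} (h : P.pEquiv p q) : P.pEquiv q p :=
  fun ⟨n, hn⟩ => h ⟨n, P.apart_symm _ _ hn⟩

lemma pEquiv_trans {p q r : P.Pt} (hpq : P.pEquiv p q) (hqr : P.pEquiv q r) :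
    P.pEquiv p r := by
  rintro ⟨n, hn⟩
  obtain ⟨m, hm⟩ := q.2.decides (p.1 n) (r.1 n) hn
  rcases hm with hm | hm
  · -- q.1 m apart from p.1 n
    refine hpq ⟨max m n, ?_⟩
    have h1 : P.apart (p.1 n) (q.1 (max m n)) :=
      P.apart_mono _ _ _ (P.refines_of_le q.2.mono (le_max_left m n)) (P.apart_symm _ _ hm)
    have h2 : P.apart (q.1 (max m n)) (p.1 (max m n)) :=
      P.apart_mono _ _ _ (P.refines_of_le p.2.mono (le_max_right m n)) (P.apart_symm _ _ h1)
    exact P.apart_symm _ _ h2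
  · refine hqr ⟨max m n, ?_⟩
    have h1 : P.apart (r.1 n) (q.1 (max m n)) :=
      P.apart_mono _ _ _ (P.refines_of_le q.2.mono (le_max_left m n)) (P.apart_symm _ _ hm)
    exact P.apart_mono _ _ _ (P.refines_of_le r.2.mono (le_max_right m n))
      (P.apart_symm _ _ h1)

/-- The setoid of points modulo `≡`. -/
def ptSetoid : Setoid P.Pt :=
  ⟨P.pEquiv, ⟨P.pEquiv_refl, P.pEquiv_symm, P.pEquiv_trans⟩⟩

/-- `â` : the set of points beginning with the dot `a`. -/
def hatSet (a : V) : Set P.Pt := { p | P.begins p.1 a }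

/-- `ā` : the `≡`-closure of `â`. -/
def barSet (a : V) : Set P.Pt := { p | ∃ q : P.Pt, P.begins q.1 a ∧ P.pEquiv p q }

/-- A natural space is basic-open when every `ā` is open. -/
def BasicOpen : Prop := ∀ a : V, IsOpen (P.barSet a)

/-- Existence of a maximal dot. -/
def HasMaxDot : Prop := ∃ m, ∀ a, P.refines a m

/-- Every basic dot begins at least one point. -/
def AllDotsInhabited : Prop := ∀ a : V, ∃ p : ℕ → V, P.IsPoint p ∧ P.begins p a

/-- The conditions making the point set of a pre-natural space a natural space. -/
def IsNaturalSpace : Prop := P.HasMaxDot ∧ P.AllDotsInhabited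

end PreNaturalSpace

/-- A refinement morphism between (pre-)natural spaces: a map on dots sending
points to points and reflecting apartness of points. -/
structure RefMorphism {V W : Type} (P : PreNaturalSpace V) (Q : PreNaturalSpace W) : Type where
  toFun : V → W
  maps_points : ∀ p : ℕ → V, P.IsPoint p → Q.IsPoint (fun n => toFun (p n))
  reflects_apart : ∀ p q : ℕ → V, P.IsPoint p → P.IsPoint q →
    (∃ n, Q.apart (toFun (p n)) (toFun (q n))) → ∃ n, P.apart (p n) (q n)

/-- The induced map on points of a refinement morphism. -/
def RefMorphism.pointMap {V W : Type} {P : PreNaturalSpace V} {Q : PreNaturalSpace W}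
    (f : RefMorphism P Q) (p : P.Pt) : Q.Pt :=
  ⟨fun n => f.toFun (p.1 n), f.maps_points p.1 p.2⟩

namespace PreNaturalSpace

variable {V W : Type} (P : PreNaturalSpace V)

/-- Restriction of a pre-natural space to a subset of dots. -/
noncomputable def restrict (S : Set V) : PreNaturalSpace S where
  countable' := by haveI := P.countable'; exact inferInstance
  apart a b := P.apart a.1 b.1
  refines a b := P.refines a.1 b.1
  apart_dec := Classical.decRel _
  refines_dec := Classical.decRel _
  apart_symm _ _ h := P.apart_symm _ _ h
  apart_irrefl a := P.apart_irrefl a.1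
  apart_mono _ _ _ h1 h2 := P.apart_mono _ _ _ h1 h2
  refines_refl a := P.refines_refl a.1
  refines_trans _ _ _ h1 h2 := P.refines_trans _ _ _ h1 h2
  refines_antisymm _ _ h1 h2 := Subtype.ext (P.refines_antisymm _ _ h1 h2)

/-! ## Trail spaces -/

/-- A `≺`-trail: a finite strictly refining sequence `a₀ ≻ a₁ ≻ …`. -/
def Trail : Type := { l : List V // l.Chain' fun a b => P.strict b a }

lemma strict_trans_flip : Transitive (fun a b : V => P.strict b a) := by
  rintro a b c ⟨h1, h1'⟩ ⟨h2, h2'⟩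
  refine ⟨P.refines_trans _ _ _ h2 h1, fun he => ?_⟩
  exact h2' (P.refines_antisymm _ _ h2 (he ▸ h1))

lemma last_refines_of_prefix {a b : List V}
    (ha : a.Chain' fun x y => P.strict y x) (hpre : b <+: a)
    {x y : V} (hx : x ∈ a.getLast?) (hy : y ∈ b.getLast?) :
    P.refines x y := by
  haveI : IsTrans V (fun x y : V => P.strict y x) := ⟨fun _ _ _ h1 h2 => P.strict_trans_flip h1 h2⟩
  have hpw : a.Pairwise fun x y => P.strict y x := List.isChain_iff_pairwise.mp ha
  obtain ⟨t, rfl⟩ := hpre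
  rcases eq_or_ne t [] with rfl | ht
  · rw [List.append_nil] at hx
    have : x = y := by
      rw [Option.mem_def] at hx hy
      exact Option.some_injective _ (hx ▸ hy ▸ rfl)
    exact this ▸ P.refines_refl x
  · rw [List.getLast?_append_of_ne_nil _ ht] at hx
    have hxt : x ∈ t := List.mem_of_mem_getLast? hx
    have hyb : y ∈ b := List.mem_of_mem_getLast? hy
    have := (List.pairwise_append.mp hpw).2.2 y hyb x hxt
    exact this.1

/-- The trail space of a pre-natural space: dots are `≺`-trails, with
`a ⊑* b` iff `b` is an initial segment of `a`, and `a #* b` iff the last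
dots of `a` and `b` are apart. -/
noncomputable def trailSpace : PreNaturalSpace P.Trail where
  countable' := by haveI := P.countable'; exact inferInstanceAs (Countable
    { l : List V // l.Chain' fun a b => P.strict b a })
  apart a b := ∃ x ∈ a.1.getLast?, ∃ y ∈ b.1.getLast?, P.apart x y
  refines a b := b.1 <+: a.1
  apart_dec := Classical.decRel _
  refines_dec := Classical.decRel _
  apart_symm := by
    rintro a b ⟨x, hx, y, hy, hxy⟩
    exact ⟨y, hy, x, hx, P.apart_symm _ _ hxy⟩
  apart_irrefl := by
    rintro a ⟨x, hx, y, hy, hxy⟩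
    rw [Option.mem_def] at hx hy
    have : x = y := Option.some_injective _ (hx ▸ hy ▸ rfl)
    exact P.apart_irrefl x (this ▸ hxy)
  apart_mono := by
    rintro a b c hab ⟨x, hx, y, hy, hxy⟩
    have hbne : b.1 ≠ [] := by
      intro h
      rw [h] at hy
      simp at hy
    have hane : a.1 ≠ [] := by
      intro h
      exact hbne (List.prefix_nil.mp (h ▸ hab))
    obtain ⟨z, hz⟩ : ∃ z, z ∈ a.1.getLast? := by
      rcases h : a.1.getLast? with _ | z
      · exact absurd (List.getLast?_eq_none_iff.mp h) hane
      · exact ⟨z, rfl⟩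
    have hzy : P.refines z y := P.last_refines_of_prefix a.2 hab hz hy
    exact ⟨x, hx, z, hz, P.apart_mono _ _ _ hzy hxy⟩
  refines_refl a := List.prefix_refl a.1
  refines_trans _ _ _ h1 h2 := h2.trans h1
  refines_antisymm a b h1 h2 :=
    Subtype.ext (h2.eq_of_length (le_antisymm h2.length_le h1.length_le))

end PreNaturalSpace

open Classical in
/-- `p♯(n)` : the `≺`-trail obtained from `p₀, …, p_{n-1}` by deleting repetitions
(for a shrinking sequence `p`, repetitions are consecutive). -/
noncomputable def segList {V : Type} (p : ℕ → V) : ℕ → List V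
  | 0 => []
  | n + 1 =>
    if (segList p n).getLast? = some (p n) then segList p n
    else segList p n ++ [p n]

namespace PreNaturalSpace

variable {V W : Type} (P : PreNaturalSpace V)

/-- The map on trail dots sending a nonempty trail to its last element and
the empty trail to `m`. -/
def lastDot (m : V) (q : P.Trail) : V := q.1.getLast?.getD m

/-- `g` is the point map induced by a trail morphism `f` (a refinement morphism
on the trail space): `g p = f (p♯(0)), f (p♯(1)), …`. -/
def InducedByTrailMorphism (Q : PreNaturalSpace W) (f : RefMorphism P.trailSpace Q)
    (g : P.Pt → Q.Pt) : Prop :=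
  ∀ p : P.Pt, ∃ t : P.trailSpace.Pt, (∀ n, (t.1 n).1 = segList p.1 n) ∧ g p = f.pointMap t

/-- `g` is a natural morphism map: induced by a refinement morphism or by a trail morphism. -/
def IsNaturalMorphismMap (Q : PreNaturalSpace W) (g : P.Pt → Q.Pt) : Prop :=
  (∃ f : RefMorphism P Q, ∀ p, g p = f.pointMap p) ∨
  (∃ f : RefMorphism P.trailSpace Q, P.InducedByTrailMorphism Q f g)

/-- Two natural spaces are isomorphic: natural morphisms both ways, inverse up to `≡`. -/
def AreIsomorphic (Q : PreNaturalSpace W) : Prop :=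
  ∃ (f : P.Pt → Q.Pt) (g : Q.Pt → P.Pt),
    P.IsNaturalMorphismMap Q f ∧ Q.IsNaturalMorphismMap P g ∧
    (∀ x, P.pEquiv (g (f x)) x) ∧ (∀ y, Q.pEquiv (f (g y)) y)

/-- A natural space is a basic neighborhood space iff it is isomorphic to a basic-open space. -/
def IsBasicNbhdSpace : Prop :=
  ∃ (W' : Type) (Q : PreNaturalSpace W'), Q.IsNaturalSpace ∧ Q.BasicOpen ∧ P.AreIsomorphic Q

/-! ## Trees, treas, spreads, spraids, fans -/

/-- `a` is a successor of `c`. -/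
def IsSucc (a c : V) : Prop := P.strict a c ∧ ∀ b, P.strict a b → P.refines b c → b = c

/-- A successor-trail (as a list, each entry a successor of the previous one). -/
def SuccChain (l : List V) : Prop := l.Chain' fun x y => P.IsSucc y x

/-- A successor-trail from `m` to `a`. -/
def IsSuccTrailFromTo (m a : V) (l : List V) : Prop :=
  P.SuccChain l ∧ l.head? = some m ∧ l.getLast? = some a

/-- `(V,⊑)` is a tree. -/
def IsTree : Prop :=
  ∃ m, (∀ a, P.refines a m) ∧ ∀ a, ∃! l : List V, P.IsSuccTrailFromTo m a l

/-- `(V,⊑)` is a trea. -/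
def IsTrea : Prop :=
  ∃ m, (∀ a, P.refines a m) ∧ (∀ a, { b | P.refines a b }.Finite) ∧
    ∀ a, ∃ g : ℕ, ∀ l : List V, P.IsSuccTrailFromTo m a l → l.length = g

/-- Every infinite successor-trail is a point. -/
def SuccTrailsArePoints : Prop :=
  ∀ q : ℕ → V, (∀ n, P.IsSucc (q (n + 1)) (q n)) → P.IsPoint q

def IsSpread : Prop := P.IsTree ∧ P.SuccTrailsArePoints

def IsSpraid : Prop := P.IsTrea ∧ P.SuccTrailsArePoints

/-- Finitely branching: every dot has finitely many successors. -/
def FinBranching : Prop := ∀ a : V, { b | P.IsSucc b a }.Finite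

def IsFan : Prop := P.IsSpread ∧ P.FinBranching

def IsFann : Prop := P.IsSpraid ∧ P.FinBranching

end PreNaturalSpace

/-!
A continuous map `Ψ : 𝒜/≡ → ℬ/≡` into a basic neighborhood space lifts to a natural morphism
`𝒜 → ℬ`; lifting a homeomorphism and its inverse gives the isomorphism.

Write `ℬ ≅ ℬ₀` with `ℬ₀` basic-open, and let `w p := u (Ψ [p])`, a point map into `ℬ₀` for which
every preimage `w⁻¹(β̄)` is open. The lift is built on trails of `𝒜`: along a trail we record a
history of `ℬ₀`-dots, and after each new dot `a` we append a strict refinement `β` of the current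
dot such that all points beginning with `a` land in `β̄` and `β` decides the next pair of an
enumeration of `V₀ × V₀`, whenever such a `β` exists. Openness of the sets `w⁻¹(β̄)` guarantees
that along every point such refinements keep appearing, so the histories form a point of the
trail space of `ℬ₀` equivalent to `w` of the point. Composing with a trail morphism realizing
`ℬ₀ → ℬ` yields the lift.
-/

namespace RefMorphism

variable {U V W : Type} {O : PreNaturalSpace U} {P : PreNaturalSpace V} {Q : PreNaturalSpace W}

def comp (g : RefMorphism P Q) (f : RefMorphism O P) : RefMorphism O Q where
  toFun := g.toFun ∘ f.toFun
  maps_points p hp := g.maps_points _ (f.maps_points p hp)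
  reflects_apart p q hp hq h :=
    f.reflects_apart p q hp hq (g.reflects_apart _ _ (f.maps_points p hp) (f.maps_points q hq) h)

lemma pointMap_pEquiv (f : RefMorphism P Q) {p q : P.Pt} (h : P.pEquiv p q) :
    Q.pEquiv (f.pointMap p) (f.pointMap q) :=
  fun hfpq => h (f.reflects_apart p.1 q.1 p.2 q.2 hfpq)

end RefMorphism

namespace PreNaturalSpace

section Dots

variable {V : Type} (P : PreNaturalSpace V) {a b c : V}

lemma apart_of_refines_left (h : P.refines a b) (hbc : P.apart b c) : P.apart a c :=
  P.apart_symm _ _ (P.apart_mono a b c h (P.apart_symm _ _ hbc))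

lemma not_apart_of_refines (h : P.refines a b) : ¬ P.apart a b :=
  fun hab => P.apart_irrefl a (P.apart_mono a b a h hab)

lemma not_apart_of_refines_both (ha : P.refines c a) (hb : P.refines c b) : ¬ P.apart a b :=
  fun hab => P.not_apart_of_refines ha (P.apart_symm _ _ (P.apart_mono c b a hb hab))

lemma strict_of_strict_of_refines (h : P.strict a b) (hbc : P.refines b c) : P.strict a c :=
  ⟨P.refines_trans _ _ _ h.1 hbc, fun hac => h.2 (P.refines_antisymm a b h.1 (hac ▸ hbc))⟩

lemma strict_of_refines_of_strict (h : P.refines a b) (hbc : P.strict b c) : P.strict a c :=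
  ⟨P.refines_trans _ _ _ h hbc.1, fun hac => hbc.2 (P.refines_antisymm b c hbc.1 (hac ▸ h))⟩

def Decides (c x y : V) : Prop := P.apart x y → P.apart c x ∨ P.apart c y

end Dots

section Points

variable {V : Type} {P : PreNaturalSpace V}

lemma Decides.of_refines {c c' x y : V} (h : P.Decides c x y) (hc : P.refines c' c) :
    P.Decides c' x y :=
  fun hxy => (h hxy).imp (P.apart_of_refines_left hc) (P.apart_of_refines_left hc)

lemma IsPoint.exists_decides {p : ℕ → V} (hp : P.IsPoint p) (x y : V) :
    ∃ k, P.Decides (p k) x y := by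
  by_cases hxy : P.apart x y
  · obtain ⟨k, hk⟩ := hp.decides x y hxy
    exact ⟨k, fun _ => hk⟩
  · exact ⟨0, fun h => absurd h hxy⟩

lemma IsPoint.exists_strict_ge {p : ℕ → V} (hp : P.IsPoint p) (n N : ℕ) :
    ∃ m, N ≤ m ∧ P.strict (p m) (p n) := by
  obtain ⟨k, hk⟩ := hp.shrink n
  exact ⟨max k N, le_max_right _ _,
    P.strict_of_refines_of_strict (P.refines_of_le hp.mono (le_max_left k N)) hk⟩

lemma begins_self (p : P.Pt) (n : ℕ) : P.begins p.1 (p.1 n) := p.2.shrink n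

lemma begins_of_refines_max {m : V} (hm : ∀ a, P.refines a m) (p : P.Pt) : P.begins p.1 m :=
  P.begins_mono p.2 (hm _) (begins_self p 0)

lemma pApart_of_apart {p q : P.Pt} {m n : ℕ} (h : P.apart (p.1 m) (q.1 n)) : P.pApart p q :=
  ⟨max m n, P.apart_of_refines_left (P.refines_of_le p.2.mono (le_max_left m n))
    (P.apart_symm _ _ (P.apart_of_refines_left (P.refines_of_le q.2.mono (le_max_right m n))
      (P.apart_symm _ _ h)))⟩

instance : @Trans P.Pt P.Pt P.Pt P.pEquiv P.pEquiv P.pEquiv := ⟨P.pEquiv_trans⟩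

lemma mem_of_isOpen_of_pEquiv {U : Set P.Pt} (hU : IsOpen U) {x y : P.Pt} (hx : x ∈ U)
    (hyx : P.pEquiv y x) : y ∈ U :=
  (hU x hx y).elim (fun h => absurd h hyx) fun ⟨m, hm⟩ => hm (begins_self y m)

lemma exists_hatSet_subset_of_isOpen {U : Set P.Pt} (hU : IsOpen U) {x : P.Pt} (hx : x ∈ U) :
    ∃ m, P.hatSet (x.1 m) ⊆ U :=
  (hU x hx x).resolve_left (P.pEquiv_refl x)

lemma mem_barSet_of_pEquiv {a : V} {p q : P.Pt} (hp : p ∈ P.barSet a) (hqp : P.pEquiv q p) :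
    q ∈ P.barSet a :=
  let ⟨r, hr, hpr⟩ := hp
  ⟨r, hr, P.pEquiv_trans hqp hpr⟩

lemma not_apart_of_mem_barSet {a : V} {p : P.Pt} (hp : p ∈ P.barSet a) (n : ℕ) :
    ¬ P.apart a (p.1 n) := fun h =>
  let ⟨_, ⟨_, hj⟩, hpq⟩ := hp
  hpq (P.pApart_of_apart (P.apart_mono _ _ _ hj.1 (P.apart_symm _ _ h)))

end Points

section SegList

variable {V : Type}

open Classical in
lemma segList_succ (p : ℕ → V) (n : ℕ) :
    segList p (n + 1) =
      if (segList p n).getLast? = some (p n) then segList p n else segList p n ++ [p n] :=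
  rfl

lemma getLast?_segList_succ (p : ℕ → V) (n : ℕ) :
    (segList p (n + 1)).getLast? = some (p n) := by
  rw [segList_succ]
  split_ifs with h
  · exact h
  · simp

lemma segList_prefix_succ (p : ℕ → V) (n : ℕ) : segList p n <+: segList p (n + 1) := by
  rw [segList_succ]
  split_ifs
  · exact List.prefix_refl _
  · exact List.prefix_append _ _

lemma segList_prefix_of_le (p : ℕ → V) {m n : ℕ} (h : m ≤ n) : segList p m <+: segList p n := by
  induction h with
  | refl => exact List.prefix_refl _
  | step _ ih => exact ih.trans (segList_prefix_succ p _)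

lemma segList_congr {p q : ℕ → V} : ∀ {n : ℕ}, (∀ i < n, p i = q i) → segList p n = segList q n
  | 0, _ => rfl
  | n + 1, h => by
    rw [segList_succ, segList_succ, segList_congr fun i hi => h i (Nat.lt_succ_of_lt hi),
      h n (Nat.lt_succ_self n)]

lemma isChain_segList (P : PreNaturalSpace V) {p : ℕ → V}
    (hp : ∀ n, P.refines (p (n + 1)) (p n)) (n : ℕ) :
    (segList p n).IsChain fun a b => P.strict b a := by
  induction n with
  | zero => exact List.isChain_nil
  | succ n ih =>
    rw [segList_succ]
    split_ifs with hlast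
    · exact ih
    refine ih.append (List.isChain_singleton _) fun x hx y hy => ?_
    cases n with
    | zero => simp [segList] at hx
    | succ k =>
      rw [getLast?_segList_succ, Option.mem_def, Option.some_inj] at hx
      rw [List.head?_singleton, Option.mem_def, Option.some_inj] at hy
      subst hx hy
      exact ⟨hp k, fun h => hlast (by rw [getLast?_segList_succ, h])⟩

lemma exists_segList_ne {P : PreNaturalSpace V} (p : P.Pt) (n : ℕ) :
    ∃ m, segList p.1 n <+: segList p.1 m ∧ segList p.1 n ≠ segList p.1 m := by
  cases n with
  | zero => exact ⟨1, List.nil_prefix, fun h => by simp [segList] at h⟩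
  | succ k =>
    obtain ⟨j, hkj, hj⟩ := p.2.exists_strict_ge k (k + 1)
    refine ⟨j + 1, segList_prefix_of_le _ (by omega), fun h => hj.2 ?_⟩
    simpa [getLast?_segList_succ] using (congrArg List.getLast? h).symm

end SegList

section TrailPoints

variable {V : Type} (P : PreNaturalSpace V)

/-- The trail-space point `p♯(0), p♯(1), …` of a point `p`. -/
noncomputable def toTrailPt (p : P.Pt) : P.trailSpace.Pt :=
  ⟨fun n => ⟨segList p.1 n, P.isChain_segList p.2.mono n⟩,
    { mono := fun n => segList_prefix_succ p.1 n
      shrink := fun n =>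
        let ⟨m, hpre, hne⟩ := exists_segList_ne p n
        ⟨m, hpre, fun h => hne (congrArg Subtype.val h).symm⟩
      decides := by
        rintro a b ⟨x, hx, y, hy, hxy⟩
        obtain ⟨m, hm⟩ := p.2.decides x y hxy
        refine ⟨m + 1, hm.imp (fun h => ⟨p.1 m, ?_, x, hx, h⟩) (fun h => ⟨p.1 m, ?_, y, hy, h⟩)⟩
        all_goals exact getLast?_segList_succ p.1 m }⟩

variable {P}

lemma toTrailPt_pEquiv {p q : P.Pt} (h : P.pEquiv p q) :
    P.trailSpace.pEquiv (P.toTrailPt p) (P.toTrailPt q) := by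
  rintro ⟨_ | k, x, hx, y, hy, hxy⟩
  · simp [toTrailPt, segList] at hx
  · simp only [toTrailPt, getLast?_segList_succ, Option.mem_def, Option.some_inj] at hx hy
    subst hx hy
    exact h ⟨k, hxy⟩

section LastDot

variable {m : V} {s t : P.Trail}

lemma lastDot_eq_of_mem {x : V} (hx : x ∈ t.1.getLast?) : P.lastDot m t = x := by
  simp [lastDot, Option.mem_def.mp hx]

lemma lastDot_of_eq_nil (ht : t.1 = []) : P.lastDot m t = m := by
  simp [lastDot, ht]

lemma lastDot_mem (ht : t.1 ≠ []) : P.lastDot m t ∈ t.1.getLast? := by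
  obtain ⟨x, hx⟩ := Option.ne_none_iff_exists'.mp (mt List.getLast?_eq_none_iff.mp ht)
  rw [P.lastDot_eq_of_mem hx]
  exact hx

lemma lastDot_refines_of_prefix (hm : ∀ a, P.refines a m) (hst : s.1 <+: t.1) :
    P.refines (P.lastDot m t) (P.lastDot m s) := by
  by_cases hs : s.1 = []
  · rw [P.lastDot_of_eq_nil hs]
    exact hm _
  have ht : t.1 ≠ [] := fun h => hs (List.prefix_nil.mp (h ▸ hst))
  exact P.last_refines_of_prefix t.2 hst (P.lastDot_mem ht) (P.lastDot_mem hs)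

lemma lastDot_strict_of_prefix (hs : s.1 ≠ []) (hst : s.1 <+: t.1) (hne : s.1 ≠ t.1) :
    P.strict (P.lastDot m t) (P.lastDot m s) := by
  obtain ⟨c, hc⟩ := hst
  have hc0 : c ≠ [] := by rintro rfl; exact hne (by simpa using hc)
  have : IsTrans V fun x y => P.strict y x := ⟨fun _ _ _ h1 h2 => P.strict_trans_flip h1 h2⟩
  have hpw : (s.1 ++ c).Pairwise fun x y => P.strict y x :=
    List.isChain_iff_pairwise.mp (hc ▸ t.2)
  have hlast : P.lastDot m t ∈ (s.1 ++ c).getLast? := hc ▸ P.lastDot_mem (hc ▸ by simp [hc0])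
  rw [List.getLast?_append_of_ne_nil _ hc0] at hlast
  exact (List.pairwise_append.mp hpw).2.2 _ (List.mem_of_mem_getLast? (P.lastDot_mem hs)) _
    (List.mem_of_mem_getLast? hlast)

lemma trailSpace_apart_iff (hm : ∀ a, P.refines a m) :
    P.trailSpace.apart s t ↔ P.apart (P.lastDot m s) (P.lastDot m t) := by
  refine ⟨fun ⟨x, hx, y, hy, hxy⟩ => ?_, fun h => ?_⟩
  · rwa [P.lastDot_eq_of_mem hx, P.lastDot_eq_of_mem hy]
  have not_apart_max : ∀ x, ¬ P.apart m x := fun x hx =>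
    P.not_apart_of_refines (hm x) (P.apart_symm _ _ hx)
  have hs : s.1 ≠ [] := fun hs => not_apart_max _ (P.lastDot_of_eq_nil hs ▸ h)
  have ht : t.1 ≠ [] := fun ht =>
    not_apart_max _ (P.apart_symm _ _ (P.lastDot_of_eq_nil ht ▸ h))
  exact ⟨_, P.lastDot_mem hs, _, P.lastDot_mem ht, h⟩

end LastDot

variable (P) {m : V}

lemma isPoint_lastDot (hm : ∀ a, P.refines a m) {σ : ℕ → P.Trail}
    (hσ : P.trailSpace.IsPoint σ) : P.IsPoint fun n => P.lastDot m (σ n) where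
  mono n := P.lastDot_refines_of_prefix hm (hσ.mono n)
  shrink n := by
    have proper : ∀ {i j}, P.trailSpace.strict (σ j) (σ i) → (σ i).1 ≠ (σ j).1 :=
      fun h he => h.2 (Subtype.ext he.symm)
    obtain ⟨k, hk⟩ := hσ.shrink n
    obtain ⟨l, hl⟩ := hσ.shrink k
    have hk0 : (σ k).1 ≠ [] := fun h => proper hk (h ▸ List.prefix_nil.mp (h ▸ hk.1))
    exact ⟨l, P.strict_of_strict_of_refines (P.lastDot_strict_of_prefix hk0 hl.1 (proper hl))
      (P.lastDot_refines_of_prefix hm hk.1)⟩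
  decides a b hab := by
    obtain ⟨k, hk⟩ := hσ.decides ⟨[a], List.isChain_singleton a⟩ ⟨[b], List.isChain_singleton b⟩
      ⟨a, rfl, b, rfl, hab⟩
    have lastDot_singleton : ∀ x, P.lastDot m ⟨[x], List.isChain_singleton x⟩ = x :=
      fun x => P.lastDot_eq_of_mem rfl
    refine ⟨k, hk.imp (fun h => ?_) (fun h => ?_)⟩ <;>
      simpa only [lastDot_singleton] using (P.trailSpace_apart_iff hm).mp h

noncomputable def lastPoint (hm : ∀ a, P.refines a m) (σ : P.trailSpace.Pt) : P.Pt :=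
  ⟨fun n => P.lastDot m (σ.1 n), P.isPoint_lastDot hm σ.2⟩

variable {P}

lemma begins_lastPoint (hm : ∀ a, P.refines a m) (σ : P.trailSpace.Pt) {n : ℕ} {x : V}
    (hx : x ∈ (σ.1 n).1.getLast?) : P.begins (P.lastPoint hm σ).1 x :=
  P.lastDot_eq_of_mem hx ▸ begins_self (P.lastPoint hm σ) n

lemma pEquiv_lastPoint_iff (hm : ∀ a, P.refines a m) {σ τ : P.trailSpace.Pt} :
    P.pEquiv (P.lastPoint hm σ) (P.lastPoint hm τ) ↔ P.trailSpace.pEquiv σ τ :=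
  not_congr (exists_congr fun _ => (P.trailSpace_apart_iff hm).symm)

lemma lastPoint_toTrailPt_pEquiv (hm : ∀ a, P.refines a m) (p : P.Pt) :
    P.pEquiv (P.lastPoint hm (P.toTrailPt p)) p := by
  rintro ⟨_ | k, hk⟩
  · change P.apart (P.lastDot m ((P.toTrailPt p).1 0)) _ at hk
    rw [P.lastDot_of_eq_nil rfl] at hk
    exact P.not_apart_of_refines (hm _) (P.apart_symm _ _ hk)
  · change P.apart (P.lastDot m ((P.toTrailPt p).1 (k + 1))) _ at hk
    rw [P.lastDot_eq_of_mem (getLast?_segList_succ p.1 k)] at hk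
    exact P.not_apart_of_refines (p.2.mono k) (P.apart_symm _ _ hk)

end TrailPoints

section Morphisms

variable {V W : Type} {P : PreNaturalSpace V} {Q : PreNaturalSpace W} {m : V}

noncomputable def lastDotMorphism (hm : ∀ a, P.refines a m) : RefMorphism P.trailSpace P where
  toFun := P.lastDot m
  maps_points _ hσ := P.isPoint_lastDot hm hσ
  reflects_apart _ _ _ _ h := h.imp fun _ => (P.trailSpace_apart_iff hm).mpr

lemma IsNaturalMorphismMap.exists_trailMorphism {v : P.Pt → Q.Pt}
    (hv : P.IsNaturalMorphismMap Q v) (hm : ∀ a, P.refines a m) :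
    ∃ M : RefMorphism P.trailSpace Q, ∀ p, Q.pEquiv (M.pointMap (P.toTrailPt p)) (v p) := by
  rcases hv with ⟨f, hf⟩ | ⟨F, hF⟩
  · refine ⟨f.comp (lastDotMorphism hm), fun p => ?_⟩
    rw [hf p]
    exact f.pointMap_pEquiv (lastPoint_toTrailPt_pEquiv hm p)
  · refine ⟨F, fun p => ?_⟩
    obtain ⟨t, ht, hFt⟩ := hF p
    obtain rfl : t = P.toTrailPt p := Subtype.ext (funext fun n => Subtype.ext (ht n))
    exact hFt ▸ Q.pEquiv_refl _

lemma IsNaturalMorphismMap.pEquiv {v : P.Pt → Q.Pt} (hv : P.IsNaturalMorphismMap Q v)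
    (hm : ∀ a, P.refines a m) {p q : P.Pt} (h : P.pEquiv p q) : Q.pEquiv (v p) (v q) := by
  obtain ⟨M, hM⟩ := hv.exists_trailMorphism hm
  calc Q.pEquiv (v p) (M.pointMap (P.toTrailPt p)) := Q.pEquiv_symm (hM p)
    Q.pEquiv _ (M.pointMap (P.toTrailPt q)) := M.pointMap_pEquiv (toTrailPt_pEquiv h)
    Q.pEquiv _ (v q) := hM q

end Morphisms

section Splice

variable {V : Type}

def splice (y z : ℕ → V) (m j : ℕ) : ℕ → V :=
  fun n => if n ≤ m then y n else z (j + (n - (m + 1)))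

variable {P : PreNaturalSpace V} {y z : ℕ → V} {m j : ℕ}

lemma splice_of_le {n : ℕ} (hn : n ≤ m) : splice y z m j n = y n := if_pos hn

lemma splice_add (k : ℕ) : splice y z m j (m + 1 + k) = z (j + k) := by
  simp only [splice, if_neg (show ¬ m + 1 + k ≤ m by omega), Nat.add_sub_cancel_left]

lemma isPoint_splice (hy : P.IsPoint y) (hz : P.IsPoint z) (hj : P.strict (z j) (y m)) :
    P.IsPoint (splice y z m j) where
  mono n := by
    rcases lt_trichotomy n m with h | rfl | h
    · rw [splice_of_le h, splice_of_le h.le]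
      exact hy.mono n
    · have h1 : splice y z n j (n + 1) = z j := splice_add 0
      rw [h1, splice_of_le le_rfl]
      exact hj.1
    · obtain ⟨k, rfl⟩ := Nat.exists_eq_add_of_lt h
      rw [show m + k + 1 + 1 = m + 1 + (k + 1) by omega, show m + k + 1 = m + 1 + k by omega,
        splice_add, splice_add]
      exact hz.mono _
  shrink n := by
    have key : ∀ i, j ≤ i → ∃ l, P.strict (splice y z m j l) (z i) := fun i hi => by
      obtain ⟨k, hik, hk⟩ := hz.exists_strict_ge i i
      exact ⟨m + 1 + (k - j), by rwa [splice_add, Nat.add_sub_cancel' (hi.trans hik)]⟩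
    by_cases hn : n ≤ m
    · obtain ⟨l, hl⟩ := key j le_rfl
      exact ⟨l, splice_of_le hn ▸ P.strict_of_strict_of_refines hl
        (P.refines_trans _ _ _ hj.1 (P.refines_of_le hy.mono hn))⟩
    · obtain ⟨k, rfl⟩ := Nat.exists_eq_add_of_le (not_le.mp hn)
      exact splice_add (y := y) k ▸ key (j + k) (by omega)
  decides a b hab := by
    obtain ⟨k, hk⟩ := hz.decides a b hab
    have hr : P.refines (z (j + k)) (z k) := P.refines_of_le hz.mono (by omega)
    exact ⟨m + 1 + k, splice_add (y := y) k ▸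
      hk.imp (P.apart_of_refines_left hr) (P.apart_of_refines_left hr)⟩

lemma splice_pEquiv (hy : P.IsPoint y) (hz : P.IsPoint z) (hj : P.strict (z j) (y m)) :
    P.pEquiv ⟨splice y z m j, isPoint_splice hy hz hj⟩ ⟨z, hz⟩ := by
  rintro ⟨n, hn⟩
  change P.apart (splice y z m j n) (z n) at hn
  by_cases h : n ≤ m
  · rw [splice_of_le h] at hn
    exact P.not_apart_of_refines_both (P.refines_trans _ _ _ (P.refines_trans _ _ _
        (P.refines_of_le hz.mono (le_max_left j n)) hj.1) (P.refines_of_le hy.mono h))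
      (P.refines_of_le hz.mono (le_max_right j n)) hn
  · obtain ⟨k, rfl⟩ : ∃ k, n = m + 1 + k := ⟨n - (m + 1), by omega⟩
    rw [splice_add] at hn
    exact P.not_apart_of_refines_both (P.refines_of_le hz.mono (le_max_left (j + k) (m + 1 + k)))
      (P.refines_of_le hz.mono (le_max_right _ _)) hn

end Splice

section Continuity

variable {V W : Type} {P : PreNaturalSpace V} {Q : PreNaturalSpace W}

-- A point beginning with `y_k` is equivalent to one that follows `y` up to index `k`, and
-- the induced map sees only `p♯(k)` when producing its `k`-th dot.
lemma continuous_pointMap_toTrailPt (M : RefMorphism P.trailSpace Q) :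
    Continuous fun p => M.pointMap (P.toTrailPt p) := by
  refine continuous_def.mpr fun O hO x hx y => ?_
  by_cases hyx : P.pApart y x
  · exact Or.inl hyx
  have hy : M.pointMap (P.toTrailPt y) ∈ O :=
    mem_of_isOpen_of_pEquiv hO hx (M.pointMap_pEquiv (toTrailPt_pEquiv hyx))
  obtain ⟨k, hk⟩ := exists_hatSet_subset_of_isOpen hO hy
  refine Or.inr ⟨k, fun z ⟨i, hi⟩ => ?_⟩
  let z' : P.Pt := ⟨splice y.1 z.1 k i, isPoint_splice y.2 z.2 hi⟩
  have hseg : segList z'.1 k = segList y.1 k :=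
    segList_congr fun n hn => splice_of_le (Nat.le_of_lt hn)
  have hz' : M.pointMap (P.toTrailPt z') ∈ O := by
    have hdot : (M.pointMap (P.toTrailPt z')).1 k = (M.pointMap (P.toTrailPt y)).1 k :=
      congrArg M.toFun (Subtype.ext hseg)
    exact hk (hdot ▸ begins_self _ k)
  exact mem_of_isOpen_of_pEquiv hO hz'
    (M.pointMap_pEquiv (toTrailPt_pEquiv (P.pEquiv_symm (splice_pEquiv y.2 z.2 hi))))

lemma IsNaturalMorphismMap.continuous {m : V} {v : P.Pt → Q.Pt}
    (hv : P.IsNaturalMorphismMap Q v) (hm : ∀ a, P.refines a m) : Continuous v := by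
  obtain ⟨M, hM⟩ := hv.exists_trailMorphism hm
  refine continuous_def.mpr fun O hO => ?_
  have hpre : v ⁻¹' O = (fun p => M.pointMap (P.toTrailPt p)) ⁻¹' O :=
    Set.ext fun p => ⟨fun h => mem_of_isOpen_of_pEquiv hO h (hM p),
      fun h => mem_of_isOpen_of_pEquiv hO h (Q.pEquiv_symm (hM p))⟩
  exact hpre ▸ (continuous_pointMap_toTrailPt M).isOpen_preimage O hO

end Continuity

section History

variable {VA VW : Type} {A : PreNaturalSpace VA} {B : PreNaturalSpace VW}
  (w : A.Pt → B.Pt) (mB : VW) (e : ℕ → VW × VW)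

-- A history `h` stands at stage `h.length`; its current dot is its last entry, or `mB` while `h`
-- is empty.
def IsNextDot (a : VA) (h : List VW) (β : VW) : Prop :=
  B.strict β (h.getLast?.getD mB) ∧ (∀ z : A.Pt, A.begins z.1 a → w z ∈ B.barSet β) ∧
    B.Decides β (e h.length).1 (e h.length).2

open Classical in
noncomputable def historyStep (h : List VW) (a : VA) : List VW :=
  if hβ : ∃ β, IsNextDot w mB e a h β then h ++ [hβ.choose] else h

noncomputable def history (l : List VA) : List VW := l.foldl (historyStep w mB e) []

variable {w mB e}

lemma history_concat (l : List VA) (a : VA) :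
    history w mB e (l ++ [a]) = historyStep w mB e (history w mB e l) a := by
  simp [history]

lemma historyStep_cases (h : List VW) (a : VA) :
    (historyStep w mB e h a = h ∧ ¬ ∃ β, IsNextDot w mB e a h β) ∨
      ∃ β, IsNextDot w mB e a h β ∧ historyStep w mB e h a = h ++ [β] := by
  by_cases hβ : ∃ β, IsNextDot w mB e a h β
  · exact Or.inr ⟨hβ.choose, hβ.choose_spec, dif_pos hβ⟩
  · exact Or.inl ⟨dif_neg hβ, hβ⟩

lemma prefix_historyStep (h : List VW) (a : VA) : h <+: historyStep w mB e h a := by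
  rcases historyStep_cases h a with ⟨heq, -⟩ | ⟨β, -, heq⟩
  · rw [heq]
  · rw [heq]
    exact List.prefix_append h [β]

lemma history_prefix {l l' : List VA} (hl : l <+: l') :
    history w mB e l <+: history w mB e l' := by
  obtain ⟨t, rfl⟩ := hl
  induction t using List.reverseRecOn with
  | nil => simp
  | append_singleton t a ih =>
    rw [← List.append_assoc, history_concat]
    exact ih.trans (prefix_historyStep _ a)

lemma isChain_history (l : List VA) :
    (history w mB e l).IsChain fun a b => B.strict b a := by
  induction l using List.reverseRecOn with
  | nil => exact List.isChain_nil
  | append_singleton l a ih =>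
    rw [history_concat]
    rcases historyStep_cases (history w mB e l) a with ⟨heq, -⟩ | ⟨β, hβ, heq⟩
    · rwa [heq]
    rw [heq]
    refine ih.append (List.isChain_singleton β) fun x hx y hy => ?_
    rw [List.head?_singleton, Option.mem_def, Option.some_inj] at hy
    subst hy
    simpa [Option.mem_def.mp hx] using hβ.1

variable (w mB e)

noncomputable def historyTrail (l : List VA) : B.Trail := ⟨history w mB e l, isChain_history l⟩

variable {w mB e}

lemma decides_getLast?_history (l : List VA) {s : ℕ} (hs : s < (history w mB e l).length) :
    B.Decides ((history w mB e l).getLast?.getD mB) (e s).1 (e s).2 := by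
  induction l using List.reverseRecOn with
  | nil => simp [history] at hs
  | append_singleton l a ih =>
    rw [history_concat] at hs ⊢
    rcases historyStep_cases (history w mB e l) a with ⟨heq, -⟩ | ⟨β, hβ, heq⟩ <;>
      rw [heq] at hs ⊢
    · exact ih hs
    rw [List.length_append, List.length_singleton] at hs
    rw [List.getLast?_concat, Option.getD_some]
    rcases Nat.lt_succ_iff_lt_or_eq.mp hs with hs | rfl
    · exact (ih hs).of_refines hβ.1.1
    · exact hβ.2.2

lemma mem_barSet_getLast?_history (hB : ∀ b, B.refines b mB) {l : List VA}
    (hl : l.IsChain fun a b => A.strict b a) (z : A.Pt)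
    (hz : ∀ x ∈ l.getLast?, A.begins z.1 x) :
    w z ∈ B.barSet ((history w mB e l).getLast?.getD mB) := by
  induction l using List.reverseRecOn with
  | nil => exact ⟨w z, begins_of_refines_max hB _, B.pEquiv_refl _⟩
  | append_singleton l a ih =>
    have hza : A.begins z.1 a := hz a (by simp)
    rw [history_concat]
    rcases historyStep_cases (history w mB e l) a with ⟨heq, -⟩ | ⟨β, hβ, heq⟩ <;> rw [heq]
    · refine ih hl.left_of_append fun x hx => A.begins_mono z.2 ?_ hza
      exact ((List.isChain_append.mp hl).2.2 x hx a rfl).1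
    · rw [List.getLast?_concat, Option.getD_some]
      exact hβ.2.1 z hza

variable {mA : VA}

lemma exists_isNextDot (hw : ∀ β, IsOpen (w ⁻¹' B.barSet β)) {p : A.Pt} {h : List VW}
    (hp : w p ∈ B.barSet (h.getLast?.getD mB)) :
    ∃ n β, ∀ a, A.refines a (p.1 n) → IsNextDot w mB e a h β := by
  obtain ⟨q, ⟨j, hj⟩, hpq⟩ := hp
  obtain ⟨k, hk⟩ := q.2.exists_decides (e h.length).1 (e h.length).2
  obtain ⟨n, hn⟩ := exists_hatSet_subset_of_isOpen (hw (q.1 (max j k)))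
    (show w p ∈ B.barSet (q.1 (max j k)) from ⟨q, begins_self q _, hpq⟩)
  refine ⟨n, q.1 (max j k), fun a ha => ⟨?_, fun z hz => hn (A.begins_mono z.2 ha hz), ?_⟩⟩
  · exact B.strict_of_refines_of_strict (B.refines_of_le q.2.mono (le_max_left j k)) hj
  · exact hk.of_refines (B.refines_of_le q.2.mono (le_max_right j k))

-- Once `σ` has passed the index `m` supplied by `exists_isNextDot`, the next dot `a` by which the
-- trail grows is eligible, so the history grows at `a` unless it has grown already.
lemma exists_length_history_lt (hA : ∀ a, A.refines a mA) (hB : ∀ b, B.refines b mB)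
    (hw : ∀ β, IsOpen (w ⁻¹' B.barSet β)) (σ : A.trailSpace.Pt) (n₀ : ℕ) :
    ∃ n, n₀ ≤ n ∧ (history w mB e (σ.1 n₀).1).length < (history w mB e (σ.1 n).1).length := by
  set h₀ := history w mB e (σ.1 n₀).1
  obtain ⟨m, β, hβ⟩ := exists_isNextDot (e := e) hw
    (mem_barSet_getLast?_history (e := e) hB (σ.1 n₀).2 _ fun _ hx => begins_lastPoint hA σ hx)
  set k := max n₀ m
  obtain ⟨n, hkn, hn⟩ := σ.2.exists_strict_ge k k
  obtain ⟨a, ha⟩ : ∃ a, (σ.1 k).1 ++ [a] <+: (σ.1 n).1 := by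
    obtain ⟨_ | ⟨a, c⟩, hc⟩ := hn.1
    · exact absurd (Subtype.ext (by simpa using hc.symm)) hn.2
    · exact ⟨a, c, by simpa using hc⟩
  refine ⟨n, le_trans (le_max_left _ _) hkn,
    lt_of_lt_of_le ?_ (history_prefix ha).length_le⟩
  have h₀k : h₀ <+: history w mB e (σ.1 k).1 :=
    history_prefix (A.trailSpace.refines_of_le σ.2.mono (le_max_left n₀ m))
  rw [history_concat]
  by_cases heq : history w mB e (σ.1 k).1 = h₀
  · have ha_le : A.refines a ((A.lastPoint hA σ).1 m) := by
      let t : A.Trail := ⟨(σ.1 k).1 ++ [a], (σ.1 n).2.prefix ha⟩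
      have hat : A.lastDot mA t = a := A.lastDot_eq_of_mem List.getLast?_concat
      exact hat ▸ A.refines_trans _ _ _ (A.lastDot_refines_of_prefix hA (List.prefix_append _ _))
        (A.lastDot_refines_of_prefix hA (A.trailSpace.refines_of_le σ.2.mono (le_max_right n₀ m)))
    rw [heq]
    obtain ⟨β', -, hstep⟩ := (historyStep_cases (w := w) (mB := mB) (e := e) h₀ a).resolve_left
      fun h => h.2 ⟨β, hβ a ha_le⟩
    simp [hstep]
  · exact lt_of_lt_of_le (lt_of_le_of_ne h₀k.length_le fun hl => heq (h₀k.eq_of_length hl).symm)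
      (prefix_historyStep _ a).length_le

lemma exists_length_history_gt (hA : ∀ a, A.refines a mA) (hB : ∀ b, B.refines b mB)
    (hw : ∀ β, IsOpen (w ⁻¹' B.barSet β)) (σ : A.trailSpace.Pt) (s : ℕ) :
    ∃ n, s < (history w mB e (σ.1 n).1).length := by
  induction s with
  | zero =>
    obtain ⟨n, -, hn⟩ := exists_length_history_lt (e := e) hA hB hw σ 0
    exact ⟨n, by omega⟩
  | succ s ih =>
    obtain ⟨n, hn⟩ := ih
    obtain ⟨n', -, hn'⟩ := exists_length_history_lt (e := e) hA hB hw σ n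
    exact ⟨n', by omega⟩

lemma isPoint_historyTrail (hA : ∀ a, A.refines a mA) (hB : ∀ b, B.refines b mB)
    (hw : ∀ β, IsOpen (w ⁻¹' B.barSet β)) (he : Function.Surjective e) (σ : A.trailSpace.Pt) :
    B.trailSpace.IsPoint fun n => historyTrail w mB e (σ.1 n).1 where
  mono n := history_prefix (σ.2.mono n)
  shrink n := by
    obtain ⟨k, hnk, hk⟩ := exists_length_history_lt (e := e) hA hB hw σ n
    exact ⟨k, history_prefix (A.trailSpace.refines_of_le σ.2.mono hnk),
      fun h => hk.ne (congrArg (fun t : B.Trail => t.1.length) h).symm⟩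
  decides := by
    rintro a b ⟨x, hx, y, hy, hxy⟩
    obtain ⟨s, hs⟩ := he (x, y)
    obtain ⟨n, hn⟩ := exists_length_history_gt (e := e) hA hB hw σ s
    have hdec := decides_getLast?_history _ hn
    rw [hs] at hdec
    have hlast := B.lastDot_mem (m := mB) (t := historyTrail w mB e (σ.1 n).1)
      (List.ne_nil_of_length_pos (show 0 < (history w mB e (σ.1 n).1).length by omega))
    exact ⟨n, (hdec hxy).imp (fun h => ⟨_, hlast, x, hx, h⟩) (fun h => ⟨_, hlast, y, hy, h⟩)⟩

noncomputable def historyPt (hA : ∀ a, A.refines a mA) (hB : ∀ b, B.refines b mB)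
    (hw : ∀ β, IsOpen (w ⁻¹' B.barSet β)) (he : Function.Surjective e)
    (σ : A.trailSpace.Pt) : B.trailSpace.Pt :=
  ⟨_, isPoint_historyTrail hA hB hw he σ⟩

lemma lastPoint_historyPt_pEquiv (hA : ∀ a, A.refines a mA) (hB : ∀ b, B.refines b mB)
    (hw : ∀ β, IsOpen (w ⁻¹' B.barSet β)) (he : Function.Surjective e) (σ : A.trailSpace.Pt) :
    B.pEquiv (B.lastPoint hB (historyPt hA hB hw he σ)) (w (A.lastPoint hA σ)) :=
  fun ⟨n, hn⟩ => not_apart_of_mem_barSet (mem_barSet_getLast?_history (e := e) hB (σ.1 n).2 _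
    fun _ hx => begins_lastPoint hA σ hx) n hn

noncomputable def historyMorphism (hA : ∀ a, A.refines a mA) (hB : ∀ b, B.refines b mB)
    (hw : ∀ β, IsOpen (w ⁻¹' B.barSet β)) (he : Function.Surjective e)
    (hw_equiv : ∀ p q, A.pEquiv p q → B.pEquiv (w p) (w q)) :
    RefMorphism A.trailSpace B.trailSpace where
  toFun t := historyTrail w mB e t.1
  maps_points σ hσ := isPoint_historyTrail hA hB hw he ⟨σ, hσ⟩
  reflects_apart σ τ hσ hτ := not_imp_not.mp fun h => (pEquiv_lastPoint_iff hB).mp <| calc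
    B.pEquiv _ (w (A.lastPoint hA ⟨σ, hσ⟩)) := lastPoint_historyPt_pEquiv hA hB hw he _
    B.pEquiv _ (w (A.lastPoint hA ⟨τ, hτ⟩)) := hw_equiv _ _ ((pEquiv_lastPoint_iff hA).mpr h)
    B.pEquiv _ _ := B.pEquiv_symm (lastPoint_historyPt_pEquiv hA hB hw he _)

end History

theorem exists_trailSpace_morphism_of_isOpen_preimage_barSet {VA VW : Type}
    {A : PreNaturalSpace VA} {B : PreNaturalSpace VW} (hA : A.HasMaxDot) (hB : B.HasMaxDot)
    (w : A.Pt → B.Pt) (hw_equiv : ∀ p q, A.pEquiv p q → B.pEquiv (w p) (w q))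
    (hw : ∀ β, IsOpen (w ⁻¹' B.barSet β)) :
    ∃ H : RefMorphism A.trailSpace B.trailSpace,
      ∀ p, B.trailSpace.pEquiv (H.pointMap (A.toTrailPt p)) (B.toTrailPt (w p)) := by
  obtain ⟨mA, hmA⟩ := hA
  obtain ⟨mB, hmB⟩ := hB
  have := B.countable'
  have : Nonempty VW := ⟨mB⟩
  obtain ⟨e, he⟩ := exists_surjective_nat (VW × VW)
  refine ⟨historyMorphism hmA hmB hw he hw_equiv, fun p => (pEquiv_lastPoint_iff hmB).mp ?_⟩
  calc B.pEquiv _ (w (A.lastPoint hmA (A.toTrailPt p))) :=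
        lastPoint_historyPt_pEquiv hmA hmB hw he _
    B.pEquiv _ (w p) := hw_equiv _ _ (lastPoint_toTrailPt_pEquiv hmA p)
    B.pEquiv _ _ := B.pEquiv_symm (lastPoint_toTrailPt_pEquiv hmB (w p))

theorem exists_isNaturalMorphismMap_lift {VA VB : Type} {A : PreNaturalSpace VA}
    {B : PreNaturalSpace VB} (hA : A.HasMaxDot) (hB : B.HasMaxDot) (hbn : B.IsBasicNbhdSpace)
    {Ψ : Quotient A.ptSetoid → Quotient B.ptSetoid} (hΨ : Continuous Ψ) :
    ∃ f : A.Pt → B.Pt, A.IsNaturalMorphismMap B f ∧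
      ∀ p, Quotient.mk _ (f p) = Ψ (Quotient.mk _ p) := by
  obtain ⟨VW, B₀, ⟨hB₀, -⟩, hB₀open, u, v, hu, hv, hvu, -⟩ := hbn
  obtain ⟨mB, hmB⟩ := hB
  obtain ⟨m₀, hm₀⟩ := hB₀
  let w : A.Pt → B₀.Pt := fun p => u (Ψ (Quotient.mk _ p)).out
  have hw_equiv : ∀ p q, A.pEquiv p q → B₀.pEquiv (w p) (w q) := fun p q h => by
    simp only [w, Quotient.sound (s := A.ptSetoid) h]
    exact B₀.pEquiv_refl _
  have hw : ∀ β, IsOpen (w ⁻¹' B₀.barSet β) := fun β => by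
    have hD : IsOpen {c : Quotient B.ptSetoid | u c.out ∈ B₀.barSet β} := by
      rw [isQuotientMap_quotient_mk'.isOpen_preimage.symm]
      convert (hu.continuous hmB).isOpen_preimage _ (hB₀open β) using 1
      ext y
      have huy := hu.pEquiv hmB (Quotient.mk_out (s := B.ptSetoid) y)
      exact ⟨fun h => mem_barSet_of_pEquiv h (B₀.pEquiv_symm huy),
        fun h => mem_barSet_of_pEquiv h huy⟩
    exact (hD.preimage hΨ).preimage continuous_quot_mk
  obtain ⟨H, hH⟩ :=
    exists_trailSpace_morphism_of_isOpen_preimage_barSet hA ⟨m₀, hm₀⟩ w hw_equiv hw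
  obtain ⟨M, hM⟩ := hv.exists_trailMorphism hm₀
  refine ⟨fun p => (M.comp H).pointMap (A.toTrailPt p),
    Or.inr ⟨_, fun p => ⟨_, fun _ => rfl, rfl⟩⟩, fun p => ?_⟩
  rw [← Quotient.out_eq (Ψ (Quotient.mk _ p))]
  apply Quotient.sound
  calc B.pEquiv _ (M.pointMap (B₀.toTrailPt (w p))) := M.pointMap_pEquiv (hH p)
    B.pEquiv _ (v (w p)) := hM _
    B.pEquiv _ _ := hvu _

end PreNaturalSpace

/-- classical: basic neighborhood spaces with homeomorphic quotient
spaces are isomorphic as natural spaces. -/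
theorem stmt7 {V W : Type} (P : PreNaturalSpace V) (Q : PreNaturalSpace W)
    (hP : P.IsNaturalSpace) (hQ : Q.IsNaturalSpace)
    (hbnP : P.IsBasicNbhdSpace) (hbnQ : Q.IsBasicNbhdSpace)
    (h : Nonempty (Quotient P.ptSetoid ≃ₜ Quotient Q.ptSetoid)) :
    P.AreIsomorphic Q := by
  obtain ⟨φ⟩ := h
  obtain ⟨f, hf, hfφ⟩ :=
    PreNaturalSpace.exists_isNaturalMorphismMap_lift hP.1 hQ.1 hbnQ φ.continuous
  obtain ⟨g, hg, hgφ⟩ :=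
    PreNaturalSpace.exists_isNaturalMorphismMap_lift hQ.1 hP.1 hbnP φ.symm.continuous
  refine ⟨f, g, hf, hg, fun x => Quotient.exact (s := P.ptSetoid) ?_,
    fun y => Quotient.exact (s := Q.ptSetoid) ?_⟩
  · rw [hgφ, hfφ, φ.symm_apply_apply]
  · rw [hfφ, hgφ, φ.apply_symm_apply]
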